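/- arXiv:2008.01708 — 6 statements merged into one kernel-verified Lean document; each statement's English description precedes it below -/
import Mathlib

section
/- Let Ω ⊆ ℝⁿ be open, let u : Ω → ℝ be C² with Δu ≥ 1 on Ω, and suppose u ≤ c on Ω for some constant c. Let Ω_R denote the set of points x ∈ Ω with closed ball of radius R about x contained in Ω. Then u(x) ≤ c − R²/(2n+4) for every x ∈ Ω_R. -/
/-!
Put `m = 2n + 4` and compare `u` with the paraboloid: `w z = u z - ‖z - x‖² / m` has
`Δw ≥ 1 - 2n/m > 0`, so `w` has no interior local maximum (there the second derivative
along every coordinate line would be `≤ 0`). Hence on `closedBall x R` it attains its maximum at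
some `y` on the sphere, and `u x = w x ≤ w y = u y - R²/m ≤ c - R²/m`.
-/

open MeasureTheory Set Metric

/-- The Laplacian of `u : ℝⁿ → ℝ`, as the sum of the second partial derivatives
in the coordinate directions. -/
noncomputable def lap {n : ℕ} (u : EuclideanSpace ℝ (Fin n) → ℝ)
    (x : EuclideanSpace ℝ (Fin n)) : ℝ :=
  ∑ i, fderiv ℝ (fun y => fderiv ℝ u y (EuclideanSpace.single i 1)) x
    (EuclideanSpace.single i 1)

open Filter Topology

theorem IsLocalMax.deriv_deriv_nonpos {f : ℝ → ℝ} {a : ℝ} (h : IsLocalMax f a)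
    (hc : ContinuousAt f a) : deriv (deriv f) a ≤ 0 := by
  by_contra! hpos
  -- the second derivative test turns the maximum into a minimum, so `f` is locally constant
  have hconst : f =ᶠ[𝓝 a] fun _ => f a :=
    (h.and (isLocalMin_of_deriv_deriv_pos hpos h.deriv_eq_zero hc)).mono
      fun _ hx => le_antisymm hx.1 hx.2
  have hflat : deriv f =ᶠ[𝓝 a] fun _ => 0 := by
    filter_upwards [hconst.eventuallyEq_nhds] with t ht
    rw [ht.deriv_eq, deriv_const]
  rw [hflat.deriv_eq, deriv_const] at hpos
  exact hpos.false

section SecondDerivative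

variable {E : Type*} [NormedAddCommGroup E]

theorem ContDiffAt.differentiableAt_fderiv_apply [NormedSpace ℝ E] {u : E → ℝ} {y : E}
    (hu : ContDiffAt ℝ 2 u y) (v : E) : DifferentiableAt ℝ (fun z => fderiv ℝ u z v) y :=
  ((hu.fderiv_right (m := 1) (by norm_num)).differentiableAt (by norm_num)).clm_apply
    (differentiableAt_const v)

theorem IsLocalMax.fderiv_fderiv_apply_nonpos [NormedSpace ℝ E] {u : E → ℝ} {y : E}
    (h : IsLocalMax u y) (hu : ContDiffAt ℝ 2 u y) (v : E) :
    fderiv ℝ (fun z => fderiv ℝ u z v) y v ≤ 0 := by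
  have hline : ∀ t : ℝ, HasDerivAt (fun s : ℝ => y + s • v) v t := fun t => by
    simpa using ((hasDerivAt_id t).smul_const v).const_add y
  have hline_tendsto : Tendsto (fun s : ℝ => y + s • v) (𝓝 0) (𝓝 y) := by
    simpa using (hline 0).continuousAt.tendsto
  have hfirst : deriv (fun t : ℝ => u (y + t • v)) =ᶠ[𝓝 0]
      fun t => fderiv ℝ u (y + t • v) v := by
    have hdiff : ∀ᶠ z in 𝓝 y, DifferentiableAt ℝ u z :=
      (hu.eventually (by simp)).mono fun z hz => hz.differentiableAt (by norm_num)
    filter_upwards [hline_tendsto.eventually hdiff] with t ht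
    exact (ht.hasFDerivAt.comp_hasDerivAt t (hline t)).deriv
  have hsecond : HasDerivAt (fun t : ℝ => fderiv ℝ u (y + t • v) v)
      (fderiv ℝ (fun z => fderiv ℝ u z v) y v) 0 :=
    (hu.differentiableAt_fderiv_apply v).hasFDerivAt.comp_hasDerivAt_of_eq 0 (hline 0)
      (by simp)
  have hmax : IsLocalMax (fun t : ℝ => u (y + t • v)) 0 :=
    IsLocalMax.comp_continuous (g := fun s : ℝ => y + s • v) (by simpa using h)
      (hline 0).continuousAt
  have := hmax.deriv_deriv_nonpos (hu.continuousAt.comp_of_eq (hline 0).continuousAt (by simp))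
  rwa [hfirst.deriv_eq, hsecond.deriv] at this

theorem fderiv_fderiv_apply_add [NormedSpace ℝ E] {u w : E → ℝ} {y : E}
    (hu : ContDiffAt ℝ 2 u y) (hw : ContDiffAt ℝ 2 w y) (v : E) :
    fderiv ℝ (fun z => fderiv ℝ (u + w) z v) y v =
      fderiv ℝ (fun z => fderiv ℝ u z v) y v + fderiv ℝ (fun z => fderiv ℝ w z v) y v := by
  have hfirst : (fun z => fderiv ℝ (u + w) z v) =ᶠ[𝓝 y]
      fun z => fderiv ℝ u z v + fderiv ℝ w z v := by
    filter_upwards [hu.eventually (by simp), hw.eventually (by simp)] with z hu' hw'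
    rw [fderiv_add (hu'.differentiableAt (by norm_num)) (hw'.differentiableAt (by norm_num))]
    rfl
  rw [hfirst.fderiv_eq, fderiv_fun_add (hu.differentiableAt_fderiv_apply v)
    (hw.differentiableAt_fderiv_apply v)]
  rfl

theorem fderiv_fderiv_apply_mul_norm_sub_sq [InnerProductSpace ℝ E] (a : ℝ) (x y v : E) :
    fderiv ℝ (fun z => fderiv ℝ (fun z => a * ‖z - x‖ ^ 2) z v) y v = 2 * a * ‖v‖ ^ 2 := by
  have hfirst : (fun z => fderiv ℝ (fun z => a * ‖z - x‖ ^ 2) z v) =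
      fun z => a * (2 * inner ℝ (z - x) v) := by
    funext z
    rw [HasFDerivAt.fderiv (f := fun z => a * ‖z - x‖ ^ 2)
      (((hasFDerivAt_id z).sub_const x).norm_sq.const_mul a)]
    simp [inner_sub_left]
  rw [hfirst, HasFDerivAt.fderiv (f := fun z => a * (2 * inner ℝ (z - x) v))
    ((((hasFDerivAt_id y).sub_const x).inner ℝ (hasFDerivAt_const v y)).const_mul 2
      |>.const_mul a)]
  simp only [smul_apply, ContinuousLinearMap.comp_apply, ContinuousLinearMap.prod_apply,
    ContinuousLinearMap.id_apply, zero_apply, fderivInnerCLM_apply, inner_zero_right,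
    inner_self_eq_norm_sq_to_K, Real.ringHom_apply, zero_add, smul_eq_mul]
  ring

end SecondDerivative

section Laplacian

variable {n : ℕ}

theorem IsLocalMax.lap_nonpos {u : EuclideanSpace ℝ (Fin n) → ℝ} {y : EuclideanSpace ℝ (Fin n)}
    (h : IsLocalMax u y) (hu : ContDiffAt ℝ 2 u y) : lap u y ≤ 0 :=
  Finset.sum_nonpos fun _ _ => h.fderiv_fderiv_apply_nonpos hu _

theorem lap_add {u w : EuclideanSpace ℝ (Fin n) → ℝ} {y : EuclideanSpace ℝ (Fin n)}
    (hu : ContDiffAt ℝ 2 u y) (hw : ContDiffAt ℝ 2 w y) : lap (u + w) y = lap u y + lap w y := by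
  simp only [lap, fderiv_fderiv_apply_add hu hw, Finset.sum_add_distrib]

theorem lap_mul_norm_sub_sq (a : ℝ) (x y : EuclideanSpace ℝ (Fin n)) :
    lap (fun z => a * ‖z - x‖ ^ 2) y = 2 * n * a := by
  simp only [lap, fderiv_fderiv_apply_mul_norm_sub_sq, PiLp.norm_single, norm_one, one_pow,
    mul_one, Finset.sum_const, Finset.card_univ, Fintype.card_fin, nsmul_eq_mul]
  ring

theorem exists_mem_sphere_isMaxOn_closedBall_of_lap_pos {w : EuclideanSpace ℝ (Fin n) → ℝ}
    {x : EuclideanSpace ℝ (Fin n)} {R : ℝ} (hR : 0 ≤ R) (hcont : ContinuousOn w (closedBall x R))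
    (hw : ∀ y ∈ ball x R, ContDiffAt ℝ 2 w y) (hlap : ∀ y ∈ ball x R, 0 < lap w y) :
    ∃ y ∈ sphere x R, IsMaxOn w (closedBall x R) y := by
  obtain ⟨y, hy, hmax⟩ :=
    (isCompact_closedBall x R).exists_isMaxOn ⟨x, mem_closedBall_self hR⟩ hcont
  refine ⟨y, ?_, hmax⟩
  by_contra hy_sphere
  have hy_ball : y ∈ ball x R := by
    rw [← closedBall_sdiff_sphere]
    exact ⟨hy, hy_sphere⟩
  have hloc : IsLocalMax w y :=
    hmax.isLocalMax (mem_of_superset (isOpen_ball.mem_nhds hy_ball) ball_subset_closedBall)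
  exact (hloc.lap_nonpos (hw y hy_ball)).not_gt (hlap y hy_ball)

end Laplacian

/-- if `u` is `C²` on an open `Ω` with `Δu ≥ 1` and `u ≤ c` on `Ω`, then
`u(x) ≤ c − R²/(2n+4)` for every `x ∈ Ω_R`, the set of points whose closed `R`-ball
lies in `Ω`. -/
theorem stmt6 {n : ℕ} (Ω : Set (EuclideanSpace ℝ (Fin n))) (hΩ : IsOpen Ω)
    (u : EuclideanSpace ℝ (Fin n) → ℝ) (hu : ContDiffOn ℝ 2 u Ω)
    (hΔ : ∀ y ∈ Ω, 1 ≤ lap u y)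
    (c : ℝ) (hc : ∀ y ∈ Ω, u y ≤ c)
    (R : ℝ) (hR : 0 < R) :
    ∀ x, closedBall x R ⊆ Ω → u x ≤ c - R ^ 2 / (2 * n + 4) := by
  intro x hsub
  set m : ℝ := 2 * n + 4
  have hm : 0 < m := by positivity
  set w := u + fun z => -m⁻¹ * ‖z - x‖ ^ 2
  have hq : ContDiff ℝ 2 fun z => -m⁻¹ * ‖z - x‖ ^ 2 :=
    contDiff_const.mul ((contDiff_id.sub contDiff_const).norm_sq ℝ)
  have hw : ∀ y ∈ Ω, ContDiffAt ℝ 2 w y := fun y hy =>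
    (hu.contDiffAt (hΩ.mem_nhds hy)).add hq.contDiffAt
  have hlap : ∀ y ∈ Ω, 0 < lap w y := by
    intro y hy
    have hcoeff : 2 * n * -m⁻¹ = 4 / m - 1 := by field_simp; ring
    rw [lap_add (hu.contDiffAt (hΩ.mem_nhds hy)) hq.contDiffAt, lap_mul_norm_sub_sq, hcoeff]
    linarith [hΔ y hy, div_pos four_pos hm]
  obtain ⟨y, hy, hmax⟩ := exists_mem_sphere_isMaxOn_closedBall_of_lap_pos hR.le
    ((hu.continuousOn.mono hsub).add hq.continuous.continuousOn)
    (fun y hy => hw y (hsub (ball_subset_closedBall hy)))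
    (fun y hy => hlap y (hsub (ball_subset_closedBall hy)))
  have hwy : w y = u y - R ^ 2 / m := by
    simp only [w, Pi.add_apply, ← dist_eq_norm, mem_sphere.1 hy]
    ring
  calc u x = w x := by simp [w]
    _ ≤ w y := hmax (mem_closedBall_self hR.le)
    _ ≤ c - R ^ 2 / m := by rw [hwy]; linarith [hc y (hsub (sphere_subset_closedBall hy))]
end

section
/- For n ≥ 3, the integral V(r) = ∫_{E(r)} |y|²/s² dy ds over the heatball E(r) = {(y,s) ∈ ℝⁿ × ℝ : 0 < s ≤ r²/(4π), |y| ≤ (2ns·log(r²/(4πs)))^{1/2}} is finite, and satisfies V(r) = rⁿ V(1). -/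
open MeasureTheory Set Real

/-- The (reflected, centred) heatball
`E(r) = {(y,s) : 0 < s ≤ r²/(4π), |y| ≤ (2ns log(r²/(4πs)))^{1/2}}`. -/
def heatBallE (n : ℕ) (r : ℝ) : Set (EuclideanSpace ℝ (Fin n) × ℝ) :=
  {ys | 0 < ys.2 ∧ ys.2 ≤ r ^ 2 / (4 * π) ∧
    ‖ys.1‖ ≤ Real.sqrt (2 * n * ys.2 * Real.log (r ^ 2 / (4 * π * ys.2)))}

/-! The parabolic dilation `(y, s) ↦ (r y, r² s)` maps `E(1)` onto `E(r)`, multiplies Lebesgue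
measure on `ℝⁿ × ℝ` by `r^(n+2)` and the integrand `|y|²/s²` by `r⁻²`, whence `V(r) = rⁿ V(1)`.
For finiteness, `log (1/(4πs)) ≤ 2 s^(-1/2)` puts `E(1)` inside
`{0 < s ≤ 1/(4π), |y| ≤ 2√n s^(1/4)}`, where the integrand is at most `4n s^(-3/2)`; integrating
over the ball slices leaves `∫₀ s^((n+2)/4 - 2) ds`, which is finite because `n ≥ 3`. -/

open scoped ENNReal
open Module (finrank)

section ParabolicDilation

variable {E : Type*} [NormedAddCommGroup E] [NormedSpace ℝ E]

def parabolicDilation (r : ℝ) (p : E × ℝ) : E × ℝ := (r • p.1, r ^ 2 * p.2)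

lemma norm_sq_div_sq_parabolicDilation (r : ℝ) (p : E × ℝ) :
    ‖(parabolicDilation r p).1‖ ^ 2 / (parabolicDilation r p).2 ^ 2
      = (r ^ 2)⁻¹ * (‖p.1‖ ^ 2 / p.2 ^ 2) := by
  rcases eq_or_ne r 0 with rfl | hr
  · simp [parabolicDilation]
  · simp only [parabolicDilation, norm_smul, Real.norm_eq_abs, mul_pow, sq_abs]
    field_simp

variable [MeasurableSpace E] [BorelSpace E]

lemma measurableEmbedding_parabolicDilation {r : ℝ} (hr : r ≠ 0) :
    MeasurableEmbedding (parabolicDilation (E := E) r) :=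
  ((MeasurableEquiv.smul₀ r hr).prodCongr
    (MeasurableEquiv.smul₀ (r ^ 2) (pow_ne_zero 2 hr))).measurableEmbedding

variable [FiniteDimensional ℝ E] (μ : Measure E) [μ.IsAddHaarMeasure]

lemma map_parabolicDilation_prod_volume {r : ℝ} (hr : 0 < r) :
    (μ.prod volume).map (parabolicDilation r)
      = ENNReal.ofReal ((r ^ (finrank ℝ E + 2))⁻¹) • μ.prod volume := by
  have hmap := Measure.map_prod_map μ volume (measurable_const_smul r)
    (measurable_const_mul (r ^ 2))
  rw [Measure.map_addHaar_smul μ hr.ne', Real.map_volume_mul_left (pow_ne_zero 2 hr.ne'),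
    Measure.prod_smul_left, Measure.prod_smul_right, smul_smul] at hmap
  rw [show parabolicDilation r = Prod.map (r • ·) (r ^ 2 * ·) from rfl, ← hmap,
    ← ENNReal.ofReal_mul (by positivity), abs_of_pos (by positivity), abs_of_pos (by positivity),
    pow_add, mul_inv]

lemma setLIntegral_comp_parabolicDilation {r : ℝ} (hr : 0 < r) (f : E × ℝ → ℝ≥0∞)
    (A : Set (E × ℝ)) :
    ∫⁻ p in parabolicDilation r ⁻¹' A, f (parabolicDilation r p) ∂μ.prod volume
      = ENNReal.ofReal ((r ^ (finrank ℝ E + 2))⁻¹) * ∫⁻ p in A, f p ∂μ.prod volume := by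
  have hT := measurableEmbedding_parabolicDilation (E := E) hr.ne'
  rw [← hT.lintegral_map, ← hT.restrict_map, map_parabolicDilation_prod_volume μ hr,
    Measure.restrict_smul, lintegral_smul_measure, smul_eq_mul]

end ParabolicDilation

lemma setLIntegral_snd_eq_lintegral_measure_closedBall {E β : Type*} [NormedAddCommGroup E]
    [MeasurableSpace E] [OpensMeasurableSpace E] [MeasurableSpace β] (μ : Measure E) [SFinite μ]
    (ν : Measure β) [SFinite ν] {I : Set β} (hI : MeasurableSet I) {ρ : β → ℝ}
    (hρ : Measurable ρ) {φ : β → ℝ≥0∞} (hφ : Measurable φ) :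
    ∫⁻ p in {p : E × β | p.2 ∈ I ∧ ‖p.1‖ ≤ ρ p.2}, φ p.2 ∂μ.prod ν
      = ∫⁻ s in I, φ s * μ (Metric.closedBall 0 (ρ s)) ∂ν := by
  have hS : MeasurableSet {p : E × β | p.2 ∈ I ∧ ‖p.1‖ ≤ ρ p.2} :=
    (measurable_snd hI).inter (measurableSet_le measurable_fst.norm (hρ.comp measurable_snd))
  have hf : Measurable ({p : E × β | p.2 ∈ I ∧ ‖p.1‖ ≤ ρ p.2}.indicator fun p ↦ φ p.2) :=
    (hφ.comp measurable_snd).indicator hS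
  rw [← lintegral_indicator hS, lintegral_prod_symm' _ hf, ← lintegral_indicator hI]
  congr 1 with s
  by_cases hs : s ∈ I
  · rw [indicator_of_mem hs, ← lintegral_indicator_const measurableSet_closedBall]
    congr 1 with y
    simp [indicator, hs]
  · simp [indicator, hs]

lemma log_one_div_le_two_mul_rpow {s : ℝ} (hs : 0 < s) :
    log (1 / (4 * π * s)) ≤ 2 * s ^ (-(1 / 2) : ℝ) := by
  calc log (1 / (4 * π * s)) ≤ log s⁻¹ := by
        refine log_le_log (by positivity) ?_
        rw [one_div]
        exact inv_anti₀ hs (le_mul_of_one_le_left hs.le (by linarith [pi_gt_three]))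
    _ ≤ s⁻¹ ^ (1 / 2 : ℝ) / (1 / 2) := log_le_rpow_div (inv_nonneg.2 hs.le) one_half_pos
    _ = 2 * s ^ (-(1 / 2) : ℝ) := by rw [inv_rpow hs.le, ← rpow_neg hs.le]; ring

section HeatBall

variable {n : ℕ}

lemma parabolicDilation_preimage_heatBallE {r : ℝ} (hr : 0 < r) :
    parabolicDilation r ⁻¹' heatBallE n r = heatBallE n 1 := by
  ext ⟨y, s⟩
  have hr2 : 0 < r ^ 2 := by positivity
  have hlog : r ^ 2 / (4 * π * (r ^ 2 * s)) = 1 / (4 * π * s) := by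
    rcases eq_or_ne s 0 with rfl | hs
    · simp
    · field_simp [pi_ne_zero]
  have hsqrt : √(2 * n * (r ^ 2 * s) * log (1 / (4 * π * s)))
      = r * √(2 * n * s * log (1 / (4 * π * s))) := by
    rw [show 2 * n * (r ^ 2 * s) * log (1 / (4 * π * s))
        = r ^ 2 * (2 * n * s * log (1 / (4 * π * s))) by ring,
      sqrt_mul hr2.le, sqrt_sq hr.le]
  simp only [heatBallE, parabolicDilation, mem_preimage, mem_ofPred_eq, hlog, hsqrt, norm_smul,
    Real.norm_eq_abs, abs_of_pos hr, mul_pos_iff_of_pos_left hr2, mul_le_mul_iff_right₀ hr,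
    one_pow]
  rw [← mul_one_div (r ^ 2), mul_le_mul_iff_right₀ hr2]

lemma lintegral_heatBallE_eq {r : ℝ} (hr : 0 < r) :
    ∫⁻ ys in heatBallE n r, ENNReal.ofReal (‖ys.1‖ ^ 2 / ys.2 ^ 2)
      = ENNReal.ofReal (r ^ n) *
          ∫⁻ ys in heatBallE n 1, ENNReal.ofReal (‖ys.1‖ ^ 2 / ys.2 ^ 2) := by
  have key := setLIntegral_comp_parabolicDilation (volume : Measure (EuclideanSpace ℝ (Fin n))) hr
    (fun ys ↦ ENNReal.ofReal (‖ys.1‖ ^ 2 / ys.2 ^ 2)) (heatBallE n r)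
  simp only [norm_sq_div_sq_parabolicDilation, ENNReal.ofReal_mul (inv_nonneg.2 (sq_nonneg r)),
    lintegral_const_mul' _ _ ENNReal.ofReal_ne_top, parabolicDilation_preimage_heatBallE hr,
    finrank_euclideanSpace_fin, ← Measure.volume_eq_prod] at key
  have hcancel : ENNReal.ofReal (r ^ (n + 2)) * ENNReal.ofReal (r ^ (n + 2))⁻¹ = 1 := by
    rw [← ENNReal.ofReal_mul (by positivity), mul_inv_cancel₀ (by positivity), ENNReal.ofReal_one]
  have hratio :
      ENNReal.ofReal (r ^ (n + 2)) * ENNReal.ofReal (r ^ 2)⁻¹ = ENNReal.ofReal (r ^ n) := by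
    rw [← ENNReal.ofReal_mul (by positivity), pow_add, mul_inv_cancel_right₀ (by positivity)]
  rw [← hratio, mul_assoc, key, ← mul_assoc, hcancel, one_mul]

lemma heatBallE_one_subset :
    heatBallE n 1 ⊆ {p | p.2 ∈ Ioc 0 (1 / (4 * π)) ∧ ‖p.1‖ ≤ 2 * √n * p.2 ^ (1 / 4 : ℝ)} := by
  rintro ⟨y, s⟩ ⟨hs, hsT, hy⟩
  dsimp only at hs hsT hy
  refine ⟨⟨hs, by simpa using hsT⟩, hy.trans ?_⟩
  have hsq : 2 * n * s * (2 * s ^ (-(1 / 2) : ℝ)) = (2 * √n * s ^ (1 / 4 : ℝ)) ^ 2 := by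
    rw [mul_pow, mul_pow, sq_sqrt n.cast_nonneg, ← rpow_natCast (s ^ _) 2, ← rpow_mul hs.le]
    rw [show (1 / 4 : ℝ) * (2 : ℕ) = 1 + -(1 / 2) by norm_num, rpow_add hs, rpow_one]
    ring
  rw [← sqrt_sq (by positivity : 0 ≤ 2 * √n * s ^ (1 / 4 : ℝ)), ← hsq]
  gcongr
  simpa using log_one_div_le_two_mul_rpow hs

lemma lintegral_heatBallE_one_lt_top (hn : 3 ≤ n) :
    ∫⁻ ys in heatBallE n 1, ENNReal.ofReal (‖ys.1‖ ^ 2 / ys.2 ^ 2) < ⊤ := by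
  set ρ : ℝ → ℝ := fun s ↦ 2 * √n * s ^ (1 / 4 : ℝ)
  set C : ℝ := (2 * √n) ^ (n + 2)
  set a : ℝ := (n + 2) / 4 - 2 with ha_def
  set S : Set (EuclideanSpace ℝ (Fin n) × ℝ) := {p | p.2 ∈ Ioc 0 (1 / (4 * π)) ∧ ‖p.1‖ ≤ ρ p.2}
  set B : ℝ → Set (EuclideanSpace ℝ (Fin n)) := Metric.closedBall 0
  have hslice : ∀ s ∈ Ioc (0 : ℝ) (1 / (4 * π)),
      ENNReal.ofReal (ρ s ^ 2 / s ^ 2) * volume (B (ρ s))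
        = ENNReal.ofReal (C * s ^ a) * volume (Metric.ball (0 : EuclideanSpace ℝ (Fin n)) 1) := by
    rintro s ⟨hs, -⟩
    rw [Measure.addHaar_closedBall _ _ (by positivity), finrank_euclideanSpace_fin, ← mul_assoc,
      ← ENNReal.ofReal_mul (by positivity)]
    congr 2
    rw [div_mul_eq_mul_div, ← pow_add, add_comm 2 n]
    simp only [ρ, C, a]
    rw [mul_pow, ← rpow_natCast (s ^ _), ← rpow_mul hs.le, rpow_sub hs, rpow_two, mul_div_assoc]
    push_cast
    ring_nf
  have hint : IntegrableOn (fun s ↦ C * s ^ a) (Ioc 0 (1 / (4 * π))) := by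
    have ha : -1 < a := by
      have : (3 : ℝ) ≤ n := mod_cast hn
      linarith
    exact Integrable.const_mul ((intervalIntegrable_iff_integrableOn_Ioc_of_le (by positivity)).1
      (intervalIntegral.intervalIntegrable_rpow' ha)) C
  calc ∫⁻ ys in heatBallE n 1, ENNReal.ofReal (‖ys.1‖ ^ 2 / ys.2 ^ 2)
      ≤ ∫⁻ ys in S, ENNReal.ofReal (‖ys.1‖ ^ 2 / ys.2 ^ 2) :=
        lintegral_mono_set heatBallE_one_subset
    _ ≤ ∫⁻ ys in S, ENNReal.ofReal (ρ ys.2 ^ 2 / ys.2 ^ 2) := by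
        refine setLIntegral_mono (by fun_prop) fun p hp ↦ ?_
        gcongr
        exact hp.2
    _ = ∫⁻ s in Ioc 0 (1 / (4 * π)), ENNReal.ofReal (ρ s ^ 2 / s ^ 2) * volume (B (ρ s)) :=
        setLIntegral_snd_eq_lintegral_measure_closedBall (ρ := ρ)
          (φ := fun s ↦ ENNReal.ofReal (ρ s ^ 2 / s ^ 2)) _ _ measurableSet_Ioc (by fun_prop)
          (by fun_prop)
    _ = (∫⁻ s in Ioc 0 (1 / (4 * π)), ENNReal.ofReal (C * s ^ a))
          * volume (Metric.ball (0 : EuclideanSpace ℝ (Fin n)) 1) := by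
        rw [setLIntegral_congr_fun measurableSet_Ioc hslice,
          lintegral_mul_const' _ _ measure_ball_lt_top.ne]
    _ < ⊤ := ENNReal.mul_lt_top hint.lintegral_lt_top measure_ball_lt_top

end HeatBall

/-- for `n ≥ 3`, `V(r) = ∫_{E(r)} |y|²/s² dy ds` is finite and
`V(r) = rⁿ V(1)`. -/
theorem stmt10 (n : ℕ) (hn : 3 ≤ n) (r : ℝ) (hr : 0 < r) :
    (∫⁻ ys in heatBallE n r, ENNReal.ofReal (‖ys.1‖ ^ 2 / ys.2 ^ 2)) < ⊤ ∧
    (∫⁻ ys in heatBallE n r, ENNReal.ofReal (‖ys.1‖ ^ 2 / ys.2 ^ 2)) =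
      ENNReal.ofReal (r ^ n) *
        ∫⁻ ys in heatBallE n 1, ENNReal.ofReal (‖ys.1‖ ^ 2 / ys.2 ^ 2) := by
  rw [lintegral_heatBallE_eq hr]
  exact ⟨ENNReal.mul_lt_top ENNReal.ofReal_lt_top (lintegral_heatBallE_one_lt_top hn), rfl⟩
end

section
/- Fix an open bounded set B ⊆ ℝⁿ containing 0, positive reals λ₁,…,λₙ with dilations δ_r(x) = (r^{λ₁}x₁,…,r^{λₙ}xₙ), degree A = λ₁ + … + λₙ, balls B_r(a) = a + δ_r(B), and suppose there exists a bounded positive measurable radius function R on B with closure of B_{R(a)}(a) ⊆ B and R(a)/R(x) ≤ K for all x in the closure of B_{R(a)}(a). Let C > 0 and 0 < p < 1. Then for every locally bounded nonnegative function f on an open set Ω satisfying f(a) ≤ (C/r^A) ∫_{B_r(a)} f whenever the closure of B_r(a) ⊆ Ω, one has f(a)^p ≤ (C̃_p/r^A) ∫_{B_r(a)} f^p whenever the closure of B_r(a) ⊆ Ω, where C̃_p = 2 R(0)^{−A} (2K^A)^{(1−p)/p} C. -/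
/-!
Fix `D = B_r(a) = T(B)` with `T x = a + δ_r x` and consider the weighted supremum
`N = sup_{x ∈ B} (r R(x))^{A/p} f(T x)`, finite because `f` is bounded on the compact set
`closure D`. For `x ∈ B` the ball of radius `u = r R(x)` about `T x` is `T(B_{R(x)}(x))`, whose
closure lies in `D`; by the comparability of `R` the weight on it is at least `(u/K)^{A/p}`, so
`f ≤ (K/u)^{A/p} N` there. Writing `f = f^{1-p} f^p` in the mean value inequality on this ball gives
`u^{A/p} f(T x) ≤ C K^{A(1-p)/p} N^{1-p} ∫_D f^p`, hence `N ≤ C K^{A(1-p)/p} N^{1-p} ∫_D f^p`,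
i.e. `N^p ≤ C K^{A(1-p)/p} ∫_D f^p`; the weight at `x = 0` then bounds `f(a)^p`.
-/

open MeasureTheory Set

/-- The anisotropic dilation `δ_r(x) = (r^{λ₁}x₁, …, r^{λₙ}xₙ)`. -/
noncomputable def dil {n : ℕ} (lam : Fin n → ℝ) (r : ℝ) (x : Fin n → ℝ) : Fin n → ℝ :=
  fun i => r ^ (lam i) * x i

/-- The ball `B_r(a) = a + δ_r(B)` associated to the unit ball `B` and the dilations. -/
noncomputable def dball {n : ℕ} (B : Set (Fin n → ℝ)) (lam : Fin n → ℝ)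
    (a : Fin n → ℝ) (r : ℝ) : Set (Fin n → ℝ) :=
  (fun x => a + dil lam r x) '' B

open Filter Topology

section Dilation

variable {n : ℕ} {B : Set (Fin n → ℝ)} (lam : Fin n → ℝ)

noncomputable def dilHomeo (c : Fin n → ℝ) {s : ℝ} (hs : 0 < s) :
    (Fin n → ℝ) ≃ₜ (Fin n → ℝ) :=
  Homeomorph.piCongrRight fun i =>
    (Homeomorph.mulLeft₀ (s ^ lam i) (Real.rpow_pos_of_pos hs _).ne').trans
      (Homeomorph.addLeft (c i))

lemma dilHomeo_apply (c : Fin n → ℝ) {s : ℝ} (hs : 0 < s) (x : Fin n → ℝ) :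
    dilHomeo lam c hs x = c + dil lam s x := by
  funext i
  simp [dilHomeo, dil, Homeomorph.piCongrRight]

lemma dball_eq_image_dilHomeo (B : Set (Fin n → ℝ)) (c : Fin n → ℝ) {s : ℝ} (hs : 0 < s) :
    dball B lam c s = dilHomeo lam c hs '' B :=
  image_congr fun x _ => (dilHomeo_apply lam c hs x).symm

lemma IsOpen.dball (hB : IsOpen B) (c : Fin n → ℝ) {s : ℝ} (hs : 0 < s) :
    IsOpen (dball B lam c s) := by
  rw [dball_eq_image_dilHomeo lam B c hs]
  exact (dilHomeo lam c hs).isOpen_image.2 hB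

lemma Bornology.IsBounded.dball (hB : Bornology.IsBounded B) (c : Fin n → ℝ) {s : ℝ}
    (hs : 0 < s) : Bornology.IsBounded (dball B lam c s) := by
  rw [dball_eq_image_dilHomeo lam B c hs]
  exact ((hB.isCompact_closure.image (dilHomeo lam c hs).continuous).isBounded).subset
    (image_mono subset_closure)

@[simp]
lemma dil_zero (s : ℝ) : dil lam s 0 = 0 := by
  funext i; simp [dil]

lemma self_mem_dball (h0 : (0 : Fin n → ℝ) ∈ B) (c : Fin n → ℝ) (s : ℝ) :
    c ∈ dball B lam c s :=
  ⟨0, h0, by simp⟩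

lemma image_dball (B : Set (Fin n → ℝ)) (a x : Fin n → ℝ) {r s : ℝ} (hr : 0 < r) (hs : 0 < s) :
    (fun y => a + dil lam r y) '' dball B lam x s = dball B lam (a + dil lam r x) (r * s) := by
  rw [dball, image_image]
  refine image_congr fun b _ => funext fun i => ?_
  simp only [Pi.add_apply, dil, Real.mul_rpow hr.le hs.le]
  ring

lemma closure_dball_subset_dball {a x : Fin n → ℝ} {r s : ℝ} (hr : 0 < r) (hs : 0 < s)
    (h : closure (dball B lam x s) ⊆ B) :
    closure (dball B lam (a + dil lam r x) (r * s)) ⊆ dball B lam a r := by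
  have hT : (fun y => a + dil lam r y) = dilHomeo lam a hr :=
    funext fun y => (dilHomeo_apply ..).symm
  rw [← image_dball lam B a x hr hs, hT, ← (dilHomeo lam a hr).image_closure,
    dball_eq_image_dilHomeo lam B a hr]
  exact image_mono h

end Dilation

lemma IsCompact.bddAbove_image_of_eventually_le {X α : Type*} [TopologicalSpace X]
    [SemilatticeSup α] [Nonempty α] {s : Set X} {f : X → α} (hs : IsCompact s)
    (hf : ∀ x ∈ s, ∃ M, ∀ᶠ y in 𝓝 x, f y ≤ M) : BddAbove (f '' s) := by
  refine hs.induction_on (p := fun t => BddAbove (f '' t)) (by simp)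
    (fun _ _ hst ht => ht.mono (image_mono hst))
    (fun _ _ hs ht => by rw [image_union]; exact hs.union ht) fun x hx => ?_
  obtain ⟨M, hM⟩ := hf x hx
  exact ⟨_, mem_nhdsWithin_of_mem_nhds hM, M, forall_mem_image.2 fun _ hy => hy⟩

lemma integrableOn_of_nonneg_of_le {X : Type*} [MeasurableSpace X] {μ : Measure X}
    {s : Set X} {f : X → ℝ} {M : ℝ} (hs : μ s < ⊤) (hs' : MeasurableSet s) (hf : Measurable f)
    (h0 : ∀ x ∈ s, 0 ≤ f x) (hM : ∀ x ∈ s, f x ≤ M) : IntegrableOn f s μ :=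
  .of_bound hs hf.aestronglyMeasurable M <| (ae_restrict_iff' hs').2 <|
    .of_forall fun x hx => by rw [Real.norm_of_nonneg (h0 x hx)]; exact hM x hx

lemma self_le_rpow_one_sub_mul_rpow {t S p : ℝ} (hp : 0 < p) (hp1 : p ≤ 1) (ht : 0 ≤ t)
    (hts : t ≤ S) : t ≤ S ^ (1 - p) * t ^ p := by
  rcases ht.eq_or_lt with rfl | ht
  · rw [Real.zero_rpow hp.ne', mul_zero]
  · calc t = t ^ (1 - p) * t ^ p := by rw [← Real.rpow_add ht, sub_add_cancel, Real.rpow_one]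
      _ ≤ S ^ (1 - p) * t ^ p := by gcongr

lemma rpow_le_of_le_mul_rpow_one_sub {N b p : ℝ} (hN : 0 ≤ N) (hp : 0 < p) (hb : 0 ≤ b)
    (h : N ≤ b * N ^ (1 - p)) : N ^ p ≤ b := by
  rcases hN.eq_or_lt with rfl | hN
  · rwa [Real.zero_rpow hp.ne']
  · refine le_of_mul_le_mul_right ?_ (Real.rpow_pos_of_pos hN (1 - p))
    calc N ^ p * N ^ (1 - p) = N := by rw [← Real.rpow_add hN, add_sub_cancel, Real.rpow_one]
      _ ≤ b * N ^ (1 - p) := h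

lemma setIntegral_le_rpow_one_sub_mul_setIntegral_rpow {X : Type*} [MeasurableSpace X]
    {μ : Measure X} {s : Set X} {f : X → ℝ} {S p : ℝ} (hs : MeasurableSet s) (hp : 0 < p)
    (hp1 : p ≤ 1) (hf : IntegrableOn f s μ) (hfp : IntegrableOn (fun x => f x ^ p) s μ)
    (h0 : ∀ x ∈ s, 0 ≤ f x) (hS : ∀ x ∈ s, f x ≤ S) :
    ∫ x in s, f x ∂μ ≤ S ^ (1 - p) * ∫ x in s, f x ^ p ∂μ := by
  rw [← integral_const_mul]
  exact setIntegral_mono_on hf (hfp.const_mul _) hs fun x hx =>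
    self_le_rpow_one_sub_mul_rpow hp hp1 (h0 x hx) (hS x hx)

def MeanValueIneq {n : ℕ} (B : Set (Fin n → ℝ)) (lam : Fin n → ℝ) (A C : ℝ)
    (Ω : Set (Fin n → ℝ)) (f : (Fin n → ℝ) → ℝ) : Prop :=
  ∀ a r, 0 < r → closure (dball B lam a r) ⊆ Ω → f a ≤ C / r ^ A * ∫ x in dball B lam a r, f x

structure IsRadiusFunction {n : ℕ} (B : Set (Fin n → ℝ)) (lam : Fin n → ℝ)
    (R : (Fin n → ℝ) → ℝ) (K : ℝ) : Prop where
  pos : ∀ a ∈ B, 0 < R a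
  bddAbove : BddAbove (R '' B)
  closure_dball_subset : ∀ a ∈ B, closure (dball B lam a (R a)) ⊆ B
  div_le : ∀ a ∈ B, ∀ x ∈ closure (dball B lam a (R a)), R a / R x ≤ K

section MeanValue

variable {n : ℕ} {B : Set (Fin n → ℝ)} {lam : Fin n → ℝ} {A C p : ℝ}
  {Ω : Set (Fin n → ℝ)} {f : (Fin n → ℝ) → ℝ} {R : (Fin n → ℝ) → ℝ} {K : ℝ}

lemma IsRadiusFunction.one_le (hR : IsRadiusFunction B lam R K)
    (h0 : (0 : Fin n → ℝ) ∈ B) : 1 ≤ K := by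
  simpa [div_self (hR.pos 0 h0).ne'] using
    hR.div_le 0 h0 0 (subset_closure (self_mem_dball lam h0 0 _))

lemma MeanValueIneq.le_rpow_one_sub_mul_setIntegral_rpow (hf : MeanValueIneq B lam A C Ω f)
    (hB : IsOpen B) (hB' : Bornology.IsBounded B) (hfm : Measurable f) (hC : 0 ≤ C)
    (hp : 0 < p) (hp1 : p ≤ 1) {b : Fin n → ℝ} {u S : ℝ} (hu : 0 < u)
    (hΩ : closure (dball B lam b u) ⊆ Ω) (h0 : ∀ z ∈ dball B lam b u, 0 ≤ f z)
    (hS : ∀ z ∈ dball B lam b u, f z ≤ S) :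
    f b ≤ C / u ^ A * (S ^ (1 - p) * ∫ z in dball B lam b u, f z ^ p) := by
  have hmeas : MeasurableSet (dball B lam b u) := (hB.dball lam b hu).measurableSet
  have hfin : volume (dball B lam b u) < ⊤ := (hB'.dball lam b hu).measure_lt_top
  have hint : IntegrableOn f (dball B lam b u) :=
    integrableOn_of_nonneg_of_le hfin hmeas hfm h0 hS
  have hintp : IntegrableOn (fun z => f z ^ p) (dball B lam b u) :=
    integrableOn_of_nonneg_of_le hfin hmeas (by fun_prop)
      (fun z hz => Real.rpow_nonneg (h0 z hz) p)
      (fun z hz => Real.rpow_le_rpow (h0 z hz) (hS z hz) hp.le)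
  refine (hf b u hu hΩ).trans (mul_le_mul_of_nonneg_left ?_ (by positivity))
  exact setIntegral_le_rpow_one_sub_mul_setIntegral_rpow hmeas hp hp1 hint hintp h0 hS

lemma IsRadiusFunction.le_of_forall_weighted_le (hR : IsRadiusFunction B lam R K) (hK : 0 < K)
    {a x : Fin n → ℝ} {r q N : ℝ} (hr : 0 < r) (hq : 0 ≤ q) (hN0 : 0 ≤ N)
    (hN : ∀ w ∈ B, (r * R w) ^ q * f (a + dil lam r w) ≤ N) (hx : x ∈ B) :
    ∀ z ∈ dball B lam (a + dil lam r x) (r * R x), f z ≤ (K / (r * R x)) ^ q * N := by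
  rw [← image_dball lam B a x hr (hR.pos x hx)]
  rintro _ ⟨w, hw, rfl⟩
  have hwB : w ∈ B := hR.closure_dball_subset x hx (subset_closure hw)
  have hrx : 0 < r * R x := mul_pos hr (hR.pos x hx)
  have hrw : 0 < r * R w := mul_pos hr (hR.pos w hwB)
  have hxw : r * R x / K ≤ r * R w := by
    rw [div_le_iff₀ hK, mul_assoc, mul_comm (R w)]
    gcongr
    exact (div_le_iff₀ (hR.pos w hwB)).1 (hR.div_le x hx w (subset_closure hw))
  calc f (a + dil lam r w) ≤ N / (r * R w) ^ q := by
        rw [le_div_iff₀ (Real.rpow_pos_of_pos hrw q), mul_comm]; exact hN w hwB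
    _ ≤ N / (r * R x / K) ^ q := by gcongr
    _ = (K / (r * R x)) ^ q * N := by
        rw [← inv_div (r * R x), Real.inv_rpow (by positivity), div_eq_inv_mul]

lemma MeanValueIneq.weighted_le_of_forall_weighted_le (hf : MeanValueIneq B lam A C Ω f)
    (hB : IsOpen B) (hB' : Bornology.IsBounded B) (hfm : Measurable f) (hC : 0 ≤ C) (hA : 0 ≤ A) (hp : 0 < p)
    (hp1 : p ≤ 1) (hR : IsRadiusFunction B lam R K) (hK : 0 < K) {a x : Fin n → ℝ} {r N : ℝ}
    (hr : 0 < r) (hΩ : closure (dball B lam a r) ⊆ Ω) (h0 : ∀ z ∈ dball B lam a r, 0 ≤ f z)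
    (hint : IntegrableOn (fun z => f z ^ p) (dball B lam a r)) (hN0 : 0 ≤ N)
    (hN : ∀ w ∈ B, (r * R w) ^ (A / p) * f (a + dil lam r w) ≤ N) (hx : x ∈ B) :
    (r * R x) ^ (A / p) * f (a + dil lam r x) ≤
      C * K ^ (A * ((1 - p) / p)) * (N ^ (1 - p) * ∫ z in dball B lam a r, f z ^ p) := by
  set u := r * R x
  set e := A * ((1 - p) / p)
  set I := ∫ z in dball B lam a r, f z ^ p
  have hu : 0 < u := mul_pos hr (hR.pos x hx)
  have hsub : closure (dball B lam (a + dil lam r x) u) ⊆ dball B lam a r :=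
    closure_dball_subset_dball lam hr (hR.pos x hx) (hR.closure_dball_subset x hx)
  have hS := hR.le_of_forall_weighted_le hK hr (div_nonneg hA hp.le) hN0 hN hx
  have hI : ∫ z in dball B lam (a + dil lam r x) u, f z ^ p ≤ I :=
    setIntegral_mono_set hint ((ae_restrict_iff' (hB.dball lam a hr).measurableSet).2
      (.of_forall fun z hz => Real.rpow_nonneg (h0 z hz) p))
      (subset_closure.trans hsub).eventuallyLE
  have hmv := hf.le_rpow_one_sub_mul_setIntegral_rpow hB hB' hfm hC hp hp1 hu
    (hsub.trans (subset_closure.trans hΩ)) (fun z hz => h0 z (hsub (subset_closure hz))) hS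
  have hpow : A / p = A + e := by simp only [e]; field_simp; ring
  calc u ^ (A / p) * f (a + dil lam r x)
      ≤ u ^ (A / p) * (C / u ^ A * (((K / u) ^ (A / p) * N) ^ (1 - p) * I)) := by
        gcongr
        exact hmv.trans (by gcongr)
    _ = C * K ^ e * (N ^ (1 - p) * I) := by
        rw [Real.mul_rpow (by positivity) hN0, ← Real.rpow_mul (by positivity),
          show A / p * (1 - p) = e by ring, Real.div_rpow hK.le hu.le, hpow, Real.rpow_add hu]
        field_simp

lemma MeanValueIneq.rpow_le_mul_setIntegral_rpow (hf : MeanValueIneq B lam A C Ω f) (hB : IsOpen B)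
    (hB' : Bornology.IsBounded B) (h0B : (0 : Fin n → ℝ) ∈ B) (hfm : Measurable f)
    (hfnn : ∀ x ∈ Ω, 0 ≤ f x) (hfloc : ∀ x ∈ Ω, ∃ M, ∀ᶠ y in 𝓝 x, f y ≤ M) (hC : 0 ≤ C)
    (hA : 0 ≤ A) (hp : 0 < p) (hp1 : p ≤ 1) (hR : IsRadiusFunction B lam R K)
    {a : Fin n → ℝ} {r : ℝ} (hr : 0 < r) (hΩ : closure (dball B lam a r) ⊆ Ω) :
    f a ^ p ≤ C * K ^ (A * ((1 - p) / p)) / (r * R 0) ^ A * ∫ z in dball B lam a r, f z ^ p := by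
  set D := dball B lam a r
  set I := ∫ z in D, f z ^ p
  have hK : 0 < K := one_pos.trans_le (hR.one_le h0B)
  have h0 : ∀ z ∈ D, 0 ≤ f z := fun z hz => hfnn z (hΩ (subset_closure hz))
  obtain ⟨M, hM⟩ : BddAbove (f '' D) :=
    ((hB'.dball lam a hr).isCompact_closure.bddAbove_image_of_eventually_le
      fun x hx => hfloc x (hΩ hx)).mono (image_mono subset_closure)
  have hint : IntegrableOn (fun z => f z ^ p) D :=
    integrableOn_of_nonneg_of_le (hB'.dball lam a hr).measure_lt_top
      (hB.dball lam a hr).measurableSet (by fun_prop) (fun z hz => Real.rpow_nonneg (h0 z hz) p)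
      fun z hz => Real.rpow_le_rpow (h0 z hz) (hM (mem_image_of_mem f hz)) hp.le
  set g := fun w => (r * R w) ^ (A / p) * f (a + dil lam r w)
  obtain ⟨M', hM'⟩ := hR.bddAbove
  have hbdd : BddAbove (g '' B) := by
    refine ⟨(r * M') ^ (A / p) * M, forall_mem_image.2 fun w hw => ?_⟩
    have hRw := hR.pos w hw
    have hM'0 : 0 ≤ M' := hRw.le.trans (hM' (mem_image_of_mem R hw))
    have hfw : 0 ≤ f (a + dil lam r w) := h0 _ ⟨w, hw, rfl⟩
    show (r * R w) ^ (A / p) * f (a + dil lam r w) ≤ _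
    gcongr
    exacts [hM' (mem_image_of_mem R hw), hM (mem_image_of_mem f ⟨w, hw, rfl⟩)]
  set N := sSup (g '' B)
  have hNa : (r * R 0) ^ (A / p) * f a ≤ N := by
    have hg0 : g 0 = (r * R 0) ^ (A / p) * f a := by simp [g]
    exact hg0 ▸ le_csSup hbdd (mem_image_of_mem g h0B)
  have hrR : 0 < r * R 0 := mul_pos hr (hR.pos 0 h0B)
  have hfa : 0 ≤ f a := h0 a (self_mem_dball lam h0B a r)
  have hN0 : 0 ≤ N := (by positivity : 0 ≤ (r * R 0) ^ (A / p) * f a).trans hNa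
  have hI : 0 ≤ I := setIntegral_nonneg (hB.dball lam a hr).measurableSet
    fun z hz => Real.rpow_nonneg (h0 z hz) p
  have hN : N ≤ C * K ^ (A * ((1 - p) / p)) * I * N ^ (1 - p) := by
    refine csSup_le ⟨_, mem_image_of_mem g h0B⟩ (forall_mem_image.2 fun x hx => ?_)
    refine (hf.weighted_le_of_forall_weighted_le hB hB' hfm hC hA hp hp1 hR hK hr hΩ h0 hint hN0
      (fun w hw => le_csSup hbdd (mem_image_of_mem g hw)) hx).trans_eq ?_
    ring
  have hNp : N ^ p ≤ C * K ^ (A * ((1 - p) / p)) * I :=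
    rpow_le_of_le_mul_rpow_one_sub hN0 hp (by positivity) hN
  rw [div_mul_eq_mul_div, le_div_iff₀ (Real.rpow_pos_of_pos hrR A)]
  calc f a ^ p * (r * R 0) ^ A = ((r * R 0) ^ (A / p) * f a) ^ p := by
        rw [Real.mul_rpow (by positivity) hfa,
          ← Real.rpow_mul hrR.le, div_mul_cancel₀ A hp.ne', mul_comm]
    _ ≤ N ^ p := by gcongr
    _ ≤ C * K ^ (A * ((1 - p) / p)) * I := hNp

end MeanValue

theorem stmt12_general (n : ℕ) (B : Set (Fin n → ℝ)) (hBopen : IsOpen B)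
    (hBbdd : Bornology.IsBounded B) (h0B : (0 : Fin n → ℝ) ∈ B)
    (lam : Fin n → ℝ) (hlam : ∀ i, 0 < lam i)
    (A : ℝ) (hA : A = ∑ i, lam i)
    (R : (Fin n → ℝ) → ℝ)
    (hRbdd : ∃ M, ∀ a ∈ B, R a ≤ M)
    (hRpos : ∀ a ∈ B, 0 < R a)
    (hRsub : ∀ a ∈ B, closure (dball B lam a (R a)) ⊆ B)
    (K : ℝ) (hK : ∀ a ∈ B, ∀ x ∈ closure (dball B lam a (R a)), R a / R x ≤ K)
    (C p : ℝ) (hC : 0 < C) (hp : 0 < p) (hp1 : p < 1)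
    (Ω : Set (Fin n → ℝ))
    (f : (Fin n → ℝ) → ℝ) (hf : Measurable f)
    (hfnn : ∀ x ∈ Ω, 0 ≤ f x)
    (hfloc : ∀ x ∈ Ω, ∃ M', ∀ᶠ y in nhds x, f y ≤ M')
    (hmvi : ∀ a r, 0 < r → closure (dball B lam a r) ⊆ Ω →
      f a ≤ C / r ^ A * ∫ x in dball B lam a r, f x) :
    ∀ a r, 0 < r → closure (dball B lam a r) ⊆ Ω →
      f a ^ p ≤ (2 * R 0 ^ (-A) * (2 * K ^ A) ^ ((1 - p) / p) * C) / r ^ A *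
        ∫ x in dball B lam a r, f x ^ p := by
  intro a r hr hcl
  obtain ⟨M, hM⟩ := hRbdd
  have hR : IsRadiusFunction B lam R K := ⟨hRpos, ⟨M, forall_mem_image.2 hM⟩, hRsub, hK⟩
  have hA0 : 0 ≤ A := hA ▸ Finset.sum_nonneg fun i _ => (hlam i).le
  have hK0 : 0 ≤ K := zero_le_one.trans (hR.one_le h0B)
  have hR0 : 0 < R 0 := hRpos 0 h0B
  have hI : 0 ≤ ∫ x in dball B lam a r, f x ^ p :=
    setIntegral_nonneg (hBopen.dball lam a hr).measurableSet fun z hz =>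
      Real.rpow_nonneg (hfnn z (hcl (subset_closure hz))) p
  refine (MeanValueIneq.rpow_le_mul_setIntegral_rpow hmvi hBopen hBbdd h0B hf hfnn hfloc hC.le
    hA0 hp hp1.le hR hr hcl).trans (mul_le_mul_of_nonneg_right ?_ hI)
  calc C * K ^ (A * ((1 - p) / p)) / (r * R 0) ^ A
      = R 0 ^ (-A) * (K ^ A) ^ ((1 - p) / p) * C / r ^ A := by
        rw [Real.mul_rpow hr.le hR0.le, Real.rpow_neg hR0.le, Real.rpow_mul hK0]
        field_simp
    _ ≤ 2 * R 0 ^ (-A) * (2 * K ^ A) ^ ((1 - p) / p) * C / r ^ A := by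
        have hq : 0 ≤ (1 - p) / p := div_nonneg (by linarith) hp.le
        have hKA : 0 ≤ K ^ A := Real.rpow_nonneg hK0 A
        gcongr ?_ * ?_ * C / _
        · exact le_mul_of_one_le_left (by positivity) one_le_two
        · gcongr
          exact le_mul_of_one_le_left hKA one_le_two

/-- Pavlović-type theorem: given a system of balls with a radius
function `R` with comparability constant `K`, any locally bounded nonnegative `f`
satisfying mean value inequalities with constant `C` satisfies the mean value
inequalities for `f^p`, `0 < p < 1`, with constant `C̃_p = 2R(0)^{−A}(2K^A)^{(1−p)/p}C`. -/
theorem stmt12 (n : ℕ) (B : Set (Fin n → ℝ)) (hBopen : IsOpen B)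
    (hBbdd : Bornology.IsBounded B) (h0B : (0 : Fin n → ℝ) ∈ B)
    (lam : Fin n → ℝ) (hlam : ∀ i, 0 < lam i)
    (A : ℝ) (hA : A = ∑ i, lam i)
    (R : (Fin n → ℝ) → ℝ) (hRmeas : Measurable R)
    (hRbdd : ∃ M, ∀ a ∈ B, R a ≤ M)
    (hRpos : ∀ a ∈ B, 0 < R a)
    (hRsub : ∀ a ∈ B, closure (dball B lam a (R a)) ⊆ B)
    (K : ℝ) (hK : ∀ a ∈ B, ∀ x ∈ closure (dball B lam a (R a)), R a / R x ≤ K)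
    (C p : ℝ) (hC : 0 < C) (hp : 0 < p) (hp1 : p < 1)
    (Ω : Set (Fin n → ℝ)) (hΩ : IsOpen Ω)
    (f : (Fin n → ℝ) → ℝ) (hf : Measurable f)
    (hfnn : ∀ x ∈ Ω, 0 ≤ f x)
    (hfloc : ∀ x ∈ Ω, ∃ M', ∀ᶠ y in nhds x, f y ≤ M')
    (hmvi : ∀ a r, 0 < r → closure (dball B lam a r) ⊆ Ω →
      f a ≤ C / r ^ A * ∫ x in dball B lam a r, f x) :
    ∀ a r, 0 < r → closure (dball B lam a r) ⊆ Ω →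
      f a ^ p ≤ (2 * R 0 ^ (-A) * (2 * K ^ A) ^ ((1 - p) / p) * C) / r ^ A *
        ∫ x in dball B lam a r, f x ^ p :=
  stmt12_general n B hBopen hBbdd h0B lam hlam A hA R hRbdd hRpos hRsub K hK C p hC hp hp1 Ω f hf
    hfnn hfloc hmvi
end

section
/- Let B be an open bounded subset of ℝⁿ containing 0, and δ_r(x) = (r^{λ₁}x₁,…,r^{λₙ}xₙ) for positive reals λᵢ, with balls B_r(a) = a + δ_r(B). Then there exists a positive lower semicontinuous function R on B such that for every a ∈ B, B_{R(a)}(a) ⊆ B, and R(a)/R(x) ≤ 4 whenever x ∈ B_{R(a)}(a). -/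
/-!
Since `B` is bounded it lies in the box `B̃ = ∏ (-M, M)`, so `B_r(a) ⊆ B̃_r(a)`. Let `S(a)` be the
largest `r ≤ 1` with `B̃_r(a) ⊆ B`; the supremum is attained because the boxes are open, which also
makes `S` lower semicontinuous. Pick `ε ∈ (0, 1]` with `ε^{λᵢ} + 4^{-λᵢ} ≤ 1` for all `i` and put
`R = ε S`. If `x ∈ B̃_{R(a)}(a)`, then `B̃_{S(a)/4}(x) ⊆ B̃_{S(a)}(a) ⊆ B`, hence `S(x) ≥ S(a)/4`.
-/

open MeasureTheory Set

open Filter Topology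

/-- The box `B̃_r(a) = a + δ_r(∏ (-M, M))`, for `r > 0`. -/
def dbox {n : ℕ} (lam : Fin n → ℝ) (M : ℝ) (a : Fin n → ℝ) (r : ℝ) : Set (Fin n → ℝ) :=
  {x | ∀ i, |x i - a i| < r ^ lam i * M}

/-- The largest `r ∈ (0, 1]` with `B̃_r(a) ⊆ B` (or `0` if there is none). -/
noncomputable def boxRadius {n : ℕ} (lam : Fin n → ℝ) (M : ℝ) (B : Set (Fin n → ℝ))
    (a : Fin n → ℝ) : ℝ :=
  sSup {r ∈ Ioc 0 1 | dbox lam M a r ⊆ B}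

theorem eventually_forall_rpow_lt {ι : Type*} [Finite ι] {lam δ : ι → ℝ}
    (hlam : ∀ i, 0 < lam i) (hδ : ∀ i, 0 < δ i) :
    ∀ᶠ r in 𝓝[>] (0 : ℝ), ∀ i, r ^ lam i < δ i := by
  refine eventually_all.2 fun i => nhdsWithin_le_nhds ?_
  have h := (Real.continuousAt_rpow_const 0 (lam i) (Or.inr (hlam i).le)).tendsto
  rw [Real.zero_rpow (hlam i).ne'] at h
  exact h.eventually_lt_const (hδ i)

theorem exists_rpow_add_rpow_le_one {ι : Type*} [Finite ι] {lam : ι → ℝ}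
    (hlam : ∀ i, 0 < lam i) {κ : ℝ} (hκ0 : 0 ≤ κ) (hκ1 : κ < 1) :
    ∃ ε, 0 < ε ∧ ε ≤ 1 ∧ ∀ i, ε ^ lam i + κ ^ lam i ≤ 1 := by
  have hgap : ∀ i, 0 < 1 - κ ^ lam i := fun i =>
    sub_pos.2 (Real.rpow_lt_one hκ0 hκ1 (hlam i))
  obtain ⟨ε, hε, ⟨hε0, hε1⟩⟩ :=
    ((eventually_forall_rpow_lt hlam hgap).and (Ioc_mem_nhdsGT one_pos)).exists
  exact ⟨ε, hε0, hε1, fun i => by linarith [hε i]⟩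

section dbox

variable {n : ℕ} {lam : Fin n → ℝ} {M : ℝ} {B : Set (Fin n → ℝ)} {a x z : Fin n → ℝ}
  {r s t : ℝ}

theorem dbox_subset_dbox (h : ∀ i, |x i - a i| + t ^ lam i * M ≤ r ^ lam i * M) :
    dbox lam M x t ⊆ dbox lam M a r := fun z hz i =>
  calc |z i - a i| ≤ |z i - x i| + |x i - a i| := abs_sub_le _ _ _
    _ < t ^ lam i * M + |x i - a i| := by linarith [hz i]
    _ ≤ r ^ lam i * M := by linarith [h i]

theorem dbox_mono (hlam : ∀ i, 0 ≤ lam i) (hM : 0 ≤ M) (hr : 0 ≤ r) (hrs : r ≤ s) :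
    dbox lam M a r ⊆ dbox lam M a s :=
  dbox_subset_dbox fun i => by
    rw [sub_self, abs_zero, zero_add]
    exact mul_le_mul_of_nonneg_right (Real.rpow_le_rpow hr hrs (hlam i)) hM

theorem dball_subset_dbox (hB : B ⊆ Metric.ball 0 M) (hr : 0 < r) :
    dball B lam a r ⊆ dbox lam M a r := by
  rintro _ ⟨x, hx, rfl⟩ i
  have hxi : |x i| < M :=
    (norm_le_pi_norm x i).trans_lt (mem_ball_zero_iff.1 (hB hx))
  have hri : 0 < r ^ lam i := Real.rpow_pos_of_pos hr _
  simpa [dil, abs_mul, abs_of_pos hri] using mul_lt_mul_of_pos_left hxi hri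

theorem exists_lt_mem_dbox (hr : 0 < r) (hz : z ∈ dbox lam M a r) :
    ∃ s ∈ Ioo 0 r, z ∈ dbox lam M a s := by
  have hnear : ∀ᶠ s in 𝓝[<] r, z ∈ dbox lam M a s := by
    refine eventually_all.2 fun i => nhdsWithin_le_nhds ?_
    have h := ((Real.continuousAt_rpow_const r (lam i) (Or.inl hr.ne')).mul_const M).tendsto
    exact h.eventually_const_lt (hz i)
  obtain ⟨s, hzs, hs⟩ := (hnear.and (Ioo_mem_nhdsLT hr)).exists
  exact ⟨s, hs, hzs⟩

end dbox

section boxRadius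

variable {n : ℕ} {lam : Fin n → ℝ} {M : ℝ} {B : Set (Fin n → ℝ)} {a x : Fin n → ℝ} {r : ℝ}

theorem boxRadius_nonneg : 0 ≤ boxRadius lam M B a :=
  Real.sSup_nonneg fun _ hr => hr.1.1.le

theorem boxRadius_le_one : boxRadius lam M B a ≤ 1 :=
  Real.sSup_le (fun _ hr => hr.1.2) zero_le_one

theorem le_boxRadius (hr : r ∈ Ioc 0 1) (hrB : dbox lam M a r ⊆ B) : r ≤ boxRadius lam M B a :=
  le_csSup ⟨1, fun _ hs => hs.1.2⟩ ⟨hr, hrB⟩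

theorem dbox_boxRadius_subset (hlam : ∀ i, 0 ≤ lam i) (hM : 0 ≤ M)
    (hpos : 0 < boxRadius lam M B a) : dbox lam M a (boxRadius lam M B a) ⊆ B := by
  have hne : {r ∈ Ioc 0 1 | dbox lam M a r ⊆ B}.Nonempty := by
    by_contra h
    rw [not_nonempty_iff_eq_empty] at h
    rw [boxRadius, h, Real.sSup_empty] at hpos
    exact lt_irrefl 0 hpos
  intro z hz
  obtain ⟨s, ⟨hs0, hsS⟩, hzs⟩ := exists_lt_mem_dbox hpos hz
  obtain ⟨r, ⟨-, hrB⟩, hsr⟩ := exists_lt_of_lt_csSup hne hsS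
  exact hrB (dbox_mono hlam hM hs0.le hsr.le hzs)

theorem boxRadius_pos (hlam : ∀ i, 0 < lam i) (hM : 0 < M) (hB : IsOpen B) (ha : a ∈ B) :
    0 < boxRadius lam M B a := by
  obtain ⟨ε, hε, hball⟩ := Metric.isOpen_iff.1 hB a ha
  obtain ⟨r, hrε, hr⟩ :=
    ((eventually_forall_rpow_lt hlam fun _ => div_pos hε hM).and (Ioc_mem_nhdsGT one_pos)).exists
  refine hr.1.trans_le (le_boxRadius hr fun z hz => hball ?_)
  refine (dist_pi_lt_iff hε).2 fun i => ?_
  calc dist (z i) (a i) = |z i - a i| := Real.dist_eq _ _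
    _ < r ^ lam i * M := hz i
    _ < ε := (lt_div_iff₀ hM).1 (hrε i)

theorem lowerSemicontinuous_boxRadius (hlam : ∀ i, 0 < lam i) (hM : 0 < M) :
    LowerSemicontinuous (boxRadius lam M B) := by
  intro a y hy
  rcases lt_or_ge y 0 with hy0 | hy0
  · exact Eventually.of_forall fun _ => hy0.trans_le boxRadius_nonneg
  set S := boxRadius lam M B a
  obtain ⟨r, hyr, hrS⟩ := exists_between hy
  have hr : r ∈ Ioc 0 1 := ⟨hy0.trans_lt hyr, hrS.le.trans boxRadius_le_one⟩
  have hgap : ∀ i, 0 < S ^ lam i * M - r ^ lam i * M := fun i =>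
    sub_pos.2 (mul_lt_mul_of_pos_right (Real.rpow_lt_rpow hr.1.le hrS (hlam i)) hM)
  have hnear : ∀ᶠ x in 𝓝 a, ∀ i, |x i - a i| < S ^ lam i * M - r ^ lam i * M := by
    refine eventually_all.2 fun i => ?_
    have h : Tendsto (fun x : Fin n → ℝ => |x i - a i|) (𝓝 a) (𝓝 |a i - a i|) :=
      (((continuous_apply i).tendsto a).sub_const (a i)).abs
    rw [sub_self, abs_zero] at h
    exact h.eventually_lt_const (hgap i)
  filter_upwards [hnear] with x hx
  refine hyr.trans_le (le_boxRadius hr ((dbox_subset_dbox fun i => ?_).trans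
    (dbox_boxRadius_subset (fun i => (hlam i).le) hM.le (hy0.trans_lt hy))))
  linarith [hx i]

theorem mul_le_boxRadius_of_mem_dbox (hlam : ∀ i, 0 ≤ lam i) (hM : 0 ≤ M)
    {ε κ : ℝ} (hε : 0 ≤ ε) (hκ : κ ∈ Ioc 0 1) (hεκ : ∀ i, ε ^ lam i + κ ^ lam i ≤ 1)
    (hpos : 0 < boxRadius lam M B a) (hx : x ∈ dbox lam M a (boxRadius lam M B a * ε)) :
    boxRadius lam M B a * κ ≤ boxRadius lam M B x := by
  set S := boxRadius lam M B a
  refine le_boxRadius ⟨mul_pos hpos hκ.1, mul_le_one₀ boxRadius_le_one hκ.1.le hκ.2⟩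
    ((dbox_subset_dbox fun i => ?_).trans (dbox_boxRadius_subset hlam hM hpos))
  have hx' := hx i
  rw [Real.mul_rpow hpos.le hε] at hx'
  rw [Real.mul_rpow hpos.le hκ.1.le]
  have hSM : 0 ≤ S ^ lam i * M := mul_nonneg (Real.rpow_nonneg hpos.le _) hM
  nlinarith [hεκ i]

theorem dball_subset_of_le_boxRadius (hlam : ∀ i, 0 ≤ lam i) (hM : 0 ≤ M)
    (hBM : B ⊆ Metric.ball 0 M) (hr : 0 < r) (hrS : r ≤ boxRadius lam M B a) :
    dball B lam a r ⊆ B :=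
  (dball_subset_dbox hBM hr).trans
    ((dbox_mono hlam hM hr.le hrS).trans (dbox_boxRadius_subset hlam hM (hr.trans_le hrS)))

end boxRadius

theorem stmt13_general (n : ℕ) (B : Set (Fin n → ℝ)) (hBopen : IsOpen B)
    (hBbdd : Bornology.IsBounded B)
    (lam : Fin n → ℝ) (hlam : ∀ i, 0 < lam i) :
    ∃ R : (Fin n → ℝ) → ℝ, LowerSemicontinuousOn R B ∧
      (∀ a ∈ B, 0 < R a) ∧
      ∀ a ∈ B, dball B lam a (R a) ⊆ B ∧
        ∀ x ∈ dball B lam a (R a), R a / R x ≤ 4 := by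
  obtain ⟨M, hM, hBM⟩ := hBbdd.subset_ball_lt 0 0
  obtain ⟨ε, hε, hε1, hεκ⟩ :=
    exists_rpow_add_rpow_le_one hlam (by norm_num : (0 : ℝ) ≤ 4⁻¹) (by norm_num)
  have hlam' : ∀ i, 0 ≤ lam i := fun i => (hlam i).le
  set S := boxRadius lam M B
  have hS : ∀ a ∈ B, 0 < S a := fun a ha => boxRadius_pos hlam hM hBopen ha
  refine ⟨fun a => S a * ε, ?_, fun a ha => mul_pos (hS a ha) hε, fun a ha => ⟨?_, ?_⟩⟩
  · exact ((continuous_mul_const ε).comp_lowerSemicontinuous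
      (lowerSemicontinuous_boxRadius hlam hM) (monotone_mul_right_of_nonneg hε.le))
      |>.lowerSemicontinuousOn B
  · exact dball_subset_of_le_boxRadius hlam' hM.le hBM (mul_pos (hS a ha) hε)
      (mul_le_of_le_one_right (hS a ha).le hε1)
  · intro x hx
    have hquarter : S a * 4⁻¹ ≤ S x := mul_le_boxRadius_of_mem_dbox hlam' hM.le hε.le
      (by norm_num) hεκ (hS a ha) (dball_subset_dbox hBM (mul_pos (hS a ha) hε) hx)
    have hSx : 0 < S x := (mul_pos (hS a ha) (by norm_num)).trans_le hquarter
    rw [mul_div_mul_right _ _ hε.ne', div_le_iff₀ hSx]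
    linarith

/-- existence of a radius function: there is a positive lower
semicontinuous `R` on `B` with `B_{R(a)}(a) ⊆ B` and `R(a)/R(x) ≤ 4` for
`x ∈ B_{R(a)}(a)`. -/
theorem stmt13 (n : ℕ) (B : Set (Fin n → ℝ)) (hBopen : IsOpen B)
    (hBbdd : Bornology.IsBounded B) (h0B : (0 : Fin n → ℝ) ∈ B)
    (lam : Fin n → ℝ) (hlam : ∀ i, 0 < lam i) :
    ∃ R : (Fin n → ℝ) → ℝ, LowerSemicontinuousOn R B ∧
      (∀ a ∈ B, 0 < R a) ∧
      ∀ a ∈ B, dball B lam a (R a) ⊆ B ∧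
        ∀ x ∈ dball B lam a (R a), R a / R x ≤ 4 :=
  stmt13_general n B hBopen hBbdd lam hlam
end

section
/- For each c > 0 and ε > 0, the family of functions u_N(x,y) = N^{−1}(e^x sin(Ny) + e) on [0,1]² satisfies Du_N = e^{2x} ≥ 1 for all N, where Du = (∂²_{xy}u)² − (∂²_{xx}u)(∂²_{yy}u), yet for every c > 0 there exists N such that the superlevel set {(x,y) ∈ [0,1]² : |u_N(x,y)| ≥ c} is empty; in particular ‖u_N‖_{L^∞([0,1]²)} → 0 as N → ∞. -/
open Real Set Filter

/-- The family `u_N(x,y) = N⁻¹(eˣ sin(Ny) + e)`. -/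
noncomputable def uN (N : ℕ) (x y : ℝ) : ℝ :=
  (Real.exp x * Real.sin (N * y) + Real.exp 1) / N

/-!
Since `∂ₓₓ u_N = N⁻¹ eˣ sin(Ny)`, `∂ᵧᵧ u_N = -N eˣ sin(Ny)` and `∂ₓᵧ u_N = eˣ cos(Ny)`, the
identity `sin² + cos² = 1` gives `D u_N = e²ˣ`, independently of `N`. On the other hand
`|u_N| ≤ 2e/N` on `[0,1]²`, so `u_N` tends to `0` uniformly there.
-/

section Derivatives

variable (N : ℕ)

lemma hasDerivAt_sin_const_mul (a y : ℝ) :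
    HasDerivAt (fun y => sin (a * y)) (cos (a * y) * a) y := by
  simpa using ((hasDerivAt_id y).const_mul a).sin

lemma hasDerivAt_cos_const_mul (a y : ℝ) :
    HasDerivAt (fun y => cos (a * y)) (-sin (a * y) * a) y := by
  simpa using ((hasDerivAt_id y).const_mul a).cos

lemma hasDerivAt_uN_fst (x y : ℝ) :
    HasDerivAt (uN N · y) (exp x * sin (N * y) / N) x :=
  (((hasDerivAt_exp x).mul_const _).add_const _).div_const _

lemma hasDerivAt_uN_snd (x y : ℝ) :
    HasDerivAt (uN N x ·) (exp x * (cos (N * y) * N) / N) y :=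
  (((hasDerivAt_sin_const_mul _ y).const_mul _).add_const _).div_const _

lemma deriv_uN_fst (y : ℝ) :
    deriv (uN N · y) = fun x => exp x * sin (N * y) / N :=
  funext fun x => (hasDerivAt_uN_fst N x y).deriv

lemma deriv_uN_snd (x : ℝ) :
    deriv (uN N x ·) = fun y => exp x * (cos (N * y) * N) / N :=
  funext fun y => (hasDerivAt_uN_snd N x y).deriv

lemma deriv_deriv_uN_fst (x y : ℝ) :
    deriv (deriv (uN N · y)) x = exp x * sin (N * y) / N := by
  rw [deriv_uN_fst]
  exact (((hasDerivAt_exp x).mul_const _).div_const _).deriv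

lemma deriv_deriv_uN_snd (x y : ℝ) :
    deriv (deriv (uN N x ·)) y = exp x * (-sin (N * y) * N * N) / N := by
  rw [deriv_uN_snd]
  exact ((((hasDerivAt_cos_const_mul _ y).mul_const _).const_mul _).div_const _).deriv

lemma deriv_deriv_uN_fst_snd (x y : ℝ) :
    deriv (fun y' => deriv (uN N · y') x) y = exp x * (cos (N * y) * N) / N := by
  simp only [deriv_uN_fst]
  exact (((hasDerivAt_sin_const_mul _ y).const_mul _).div_const _).deriv

end Derivatives

theorem neg_det_hessian_uN {N : ℕ} (hN : N ≠ 0) (x y : ℝ) :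
    (deriv (fun y' => deriv (uN N · y') x) y) ^ 2 -
      deriv (deriv (uN N · y)) x * deriv (deriv (uN N x ·)) y = exp (2 * x) := by
  have hN' : (N : ℝ) ≠ 0 := Nat.cast_ne_zero.mpr hN
  rw [deriv_deriv_uN_fst_snd, deriv_deriv_uN_fst, deriv_deriv_uN_snd, two_mul, exp_add]
  field_simp
  linear_combination sin_sq_add_cos_sq (N * y)

lemma abs_uN_le {x : ℝ} (hx : x ≤ 1) (N : ℕ) (y : ℝ) : |uN N x y| ≤ 2 * exp 1 / N := by
  have hsin : |exp x * sin (N * y)| ≤ exp 1 := by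
    rw [abs_mul, abs_of_pos (exp_pos x)]
    calc exp x * |sin (N * y)| ≤ exp 1 * 1 :=
          mul_le_mul (exp_le_exp.mpr hx) (abs_sin_le_one _) (abs_nonneg _) (exp_pos 1).le
      _ = exp 1 := mul_one _
  have hnum : |exp x * sin (N * y) + exp 1| ≤ 2 * exp 1 :=
    calc _ ≤ |exp x * sin (N * y)| + |exp 1| := abs_add_le _ _
      _ ≤ exp 1 + exp 1 := by rw [abs_of_pos (exp_pos 1)]; gcongr
      _ = 2 * exp 1 := by ring
  rw [uN, abs_div, Nat.abs_cast]
  exact div_le_div_of_nonneg_right hnum N.cast_nonneg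

lemma iSup_abs_uN_le (N : ℕ) :
    ⨆ q ∈ Icc ((0 : ℝ), (0 : ℝ)) (1, 1), |uN N q.1 q.2| ≤ 2 * exp 1 / N := by
  have h0 : 0 ≤ 2 * exp 1 / N := by positivity
  exact Real.iSup_le (fun q => Real.iSup_le (fun hq => abs_uN_le hq.2.1 N q.2) h0) h0

lemma iSup_abs_uN_nonneg (N : ℕ) :
    0 ≤ ⨆ q ∈ Icc ((0 : ℝ), (0 : ℝ)) (1, 1), |uN N q.1 q.2| :=
  Real.iSup_nonneg fun _ => Real.iSup_nonneg fun _ => abs_nonneg _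

/-- `u_N` satisfies `Du_N = (∂²_{xy}u)² − (∂²_{xx}u)(∂²_{yy}u) = e^{2x} ≥ 1`
on `[0,1]²`, yet for every `c > 0` there is `N` with `{|u_N| ≥ c} ∩ [0,1]²` empty; in
particular `‖u_N‖_{L^∞([0,1]²)} → 0`. -/
theorem stmt16 :
    (∀ N : ℕ, 1 ≤ N → ∀ x y : ℝ,
      (deriv (fun y' => deriv (fun x' => uN N x' y') x) y) ^ 2 -
        (deriv (deriv (fun x' => uN N x' y)) x) *
          (deriv (deriv (fun y' => uN N x y')) y) = Real.exp (2 * x) ∧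
      (0 ≤ x → 1 ≤ Real.exp (2 * x))) ∧
    (∀ c > (0:ℝ), ∃ N : ℕ, 1 ≤ N ∧
      {q : ℝ × ℝ | q ∈ Set.Icc ((0:ℝ), (0:ℝ)) (1, 1) ∧ c ≤ |uN N q.1 q.2|} = ∅) ∧
    Tendsto (fun N : ℕ => ⨆ q ∈ Set.Icc ((0:ℝ), (0:ℝ)) (1, 1), |uN N q.1 q.2|)
      atTop (nhds 0) := by
  have hbound : Tendsto (fun N : ℕ => 2 * exp 1 / N) atTop (nhds 0) :=
    tendsto_const_div_atTop_nhds_zero_nat _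
  refine ⟨fun N hN x y => ⟨neg_det_hessian_uN (by omega) x y, fun hx => one_le_exp (by linarith)⟩,
    fun c hc => ?_, ?_⟩
  · obtain ⟨N, hN, hNc⟩ :=
      ((eventually_ge_atTop 1).and (hbound.eventually (gt_mem_nhds hc))).exists
    refine ⟨N, hN, eq_empty_iff_forall_notMem.mpr fun q ⟨hq, hcq⟩ => ?_⟩
    exact (hcq.trans (abs_uN_le hq.2.1 N q.2)).not_gt hNc
  · exact tendsto_of_tendsto_of_tendsto_of_le_of_le tendsto_const_nhds hbound
      iSup_abs_uN_nonneg iSup_abs_uN_le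
end

section
/- Let Ω ⊆ ℝⁿ be bounded with positive measure, and let u : Ω → ℝ satisfy the uniform sublevel set estimate |{x ∈ Ω : |u(x)| ≤ ε}| ≤ C ε^δ for all ε > 0, for some C, δ > 0. Then for every p with −δ < p < 0, the normalised mean ‖u‖_p = ((1/|Ω|)∫_Ω |u|^p)^{1/p} satisfies ‖u‖_p ≥ ( 2^{−p+k₀(δ+p)} C / ((1 − 2^{−δ−p})|Ω|) + 2^{k₀ p} )^{1/p}, where k₀ is the smallest integer k with 2^{kδ} C ≥ |Ω|; in particular ‖u‖_p is bounded below by a positive constant depending only on C, δ, |Ω|, and p. -/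
/-!
Split `s` into the null set `{u = 0}`, the set `{|u| > 2 ^ m}`, where `|u| ^ p ≤ 2 ^ (m p)`, and
the dyadic shells `2 ^ (m - j - 1) < |u| ≤ 2 ^ (m - j)`. On the `j`-th shell `|u| ^ p` is at most
`2 ^ ((m - j - 1) p)` while the sublevel estimate bounds its measure by `C 2 ^ ((m - j) δ)`, so
the shells contribute a geometric series of ratio `2 ^ (-δ - p) < 1`. Since `p < 0`, raising the
resulting bound on the mean of `|u| ^ p` to the power `1 / p` reverses it.
-/

open MeasureTheory Set ENNReal Filter Topology

theorem ENNReal.rpow_le_rpow_of_nonpos {x y : ℝ≥0∞} {z : ℝ} (hxy : x ≤ y) (hz : z ≤ 0) :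
    y ^ z ≤ x ^ z := by
  rw [← neg_neg z, rpow_neg y, rpow_neg x, ← inv_rpow, ← inv_rpow]
  exact rpow_le_rpow (ENNReal.inv_le_inv.mpr hxy) (neg_nonneg.mpr hz)

theorem Real.one_sub_two_rpow_nonneg {q : ℝ} (hq : q ≤ 0) : 0 ≤ 1 - (2 : ℝ) ^ q :=
  sub_nonneg.mpr (Real.rpow_le_one_of_one_le_of_nonpos one_le_two hq)

theorem Real.exists_nat_mem_Ioc_two_rpow_sub {t m : ℝ} (ht : 0 < t) (htm : t ≤ 2 ^ m) :
    ∃ j : ℕ, t ∈ Ioc ((2 : ℝ) ^ (m - (j + 1))) (2 ^ (m - j)) := by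
  have hlog : Real.logb 2 t ≤ m := (Real.logb_le_iff_le_rpow one_lt_two ht).mpr htm
  refine ⟨⌊m - Real.logb 2 t⌋₊, ?_, ?_⟩
  · rw [← Real.lt_logb_iff_rpow_lt one_lt_two ht]
    linarith [Nat.lt_floor_add_one (m - Real.logb 2 t)]
  · rw [← Real.logb_le_iff_le_rpow one_lt_two ht]
    linarith [Nat.floor_le (sub_nonneg.mpr hlog)]

section Dyadic

variable {α : Type*} {s : Set α} {u : α → ℝ}

def dyadicShell (s : Set α) (u : α → ℝ) (m : ℝ) (j : ℕ) : Set α :=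
  {x ∈ s | |u x| ∈ Ioc ((2 : ℝ) ^ (m - (j + 1))) (2 ^ (m - j))}

theorem subset_union_dyadicShell (m : ℝ) :
    s ⊆ ({x ∈ s | u x = 0} ∪ {x ∈ s | 2 ^ m < |u x|}) ∪ ⋃ j, dyadicShell s u m j := by
  intro x hx
  rcases eq_or_ne (u x) 0 with hzero | hne
  · exact Or.inl (Or.inl ⟨hx, hzero⟩)
  rcases lt_or_ge (2 ^ m) |u x| with hbig | hsmall
  · exact Or.inl (Or.inr ⟨hx, hbig⟩)
  obtain ⟨j, hj⟩ := Real.exists_nat_mem_Ioc_two_rpow_sub (abs_pos.mpr hne) hsmall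
  exact Or.inr (mem_iUnion.mpr ⟨j, hx, hj⟩)

end Dyadic

section Sublevel

variable {α : Type*} [MeasurableSpace α] {μ : Measure α} {s : Set α} {u : α → ℝ}
  {C δ p : ℝ}

def HasSublevelBound (μ : Measure α) (s : Set α) (u : α → ℝ) (C δ : ℝ) : Prop :=
  ∀ ε > (0 : ℝ), μ {x ∈ s | |u x| ≤ ε} ≤ ENNReal.ofReal (C * ε ^ δ)

theorem measure_zero_set_eq_zero_of_sublevel
    (hδ : 0 < δ) (hsub : HasSublevelBound μ s u C δ) :
    μ {x ∈ s | u x = 0} = 0 := by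
  have hlim : Tendsto (fun ε : ℝ => ENNReal.ofReal (C * ε ^ δ)) (𝓝[>] 0) (𝓝 0) := by
    have : Tendsto (fun ε : ℝ => C * ε ^ δ) (𝓝 0) (𝓝 (C * 0 ^ δ)) :=
      (continuous_const.mul (Real.continuous_rpow_const hδ.le)).tendsto 0
    rw [Real.zero_rpow hδ.ne', mul_zero] at this
    simpa using (ENNReal.tendsto_ofReal this).mono_left nhdsWithin_le_nhds
  refine le_antisymm (ge_of_tendsto hlim (eventually_nhdsWithin_of_forall
    fun ε (hε : 0 < ε) => ?_)) bot_le
  have hzero_sub : {x ∈ s | u x = 0} ⊆ {x ∈ s | |u x| ≤ ε} := fun x hx =>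
    ⟨hx.1, by simp [hx.2, hε.le]⟩
  exact (measure_mono hzero_sub).trans (hsub ε hε)

theorem setLIntegral_ofReal_abs_rpow_le (hs : MeasurableSet s) (hp : p ≤ 0) {t : ℝ} (ht : 0 < t)
    (hut : ∀ x ∈ s, t ≤ |u x|) :
    ∫⁻ x in s, ENNReal.ofReal |u x| ^ p ∂μ ≤ ENNReal.ofReal (t ^ p) * μ s := by
  rw [← setLIntegral_const]
  refine setLIntegral_mono' hs fun x hx => ?_
  rw [← ENNReal.ofReal_rpow_of_pos ht]
  exact ENNReal.rpow_le_rpow_of_nonpos (ENNReal.ofReal_le_ofReal (hut x hx)) hp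

theorem measurableSet_dyadicShell (hs : MeasurableSet s) (hu : Measurable u) (m : ℝ) (j : ℕ) :
    MeasurableSet (dyadicShell s u m j) :=
  hs.inter (measurableSet_Ioc.preimage hu.abs)

theorem setLIntegral_dyadicShell_le (hs : MeasurableSet s) (hu : Measurable u) (hp : p ≤ 0)
    (hsub : HasSublevelBound μ s u C δ) (m : ℝ) (j : ℕ) :
    ∫⁻ x in dyadicShell s u m j, ENNReal.ofReal |u x| ^ p ∂μ ≤
      ENNReal.ofReal (2 ^ (-p + m * (δ + p)) * C * (2 ^ (-δ - p)) ^ j) := by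
  have hexp : ((2 : ℝ) ^ (m - (j + 1))) ^ p * (C * ((2 : ℝ) ^ (m - j)) ^ δ) =
      2 ^ (-p + m * (δ + p)) * C * (2 ^ (-δ - p)) ^ j := by
    simp only [← Real.rpow_mul zero_le_two, ← Real.rpow_natCast, mul_assoc,
      mul_left_comm _ C, ← Real.rpow_add two_pos]
    ring_nf
  have hshell_sub : dyadicShell s u m j ⊆ {x ∈ s | |u x| ≤ 2 ^ (m - j)} :=
    fun x hx => ⟨hx.1, hx.2.2⟩
  calc ∫⁻ x in dyadicShell s u m j, ENNReal.ofReal |u x| ^ p ∂μ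
      ≤ ENNReal.ofReal (((2 : ℝ) ^ (m - (j + 1))) ^ p) * μ (dyadicShell s u m j) :=
        setLIntegral_ofReal_abs_rpow_le (measurableSet_dyadicShell hs hu m j) hp
          (by positivity) fun x hx => hx.2.1.le
    _ ≤ ENNReal.ofReal (((2 : ℝ) ^ (m - (j + 1))) ^ p) *
          ENNReal.ofReal (C * ((2 : ℝ) ^ (m - j)) ^ δ) := by
        gcongr
        exact (measure_mono hshell_sub).trans (hsub _ (by positivity))
    _ = ENNReal.ofReal (2 ^ (-p + m * (δ + p)) * C * (2 ^ (-δ - p)) ^ j) := by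
        rw [← ENNReal.ofReal_mul (by positivity), hexp]

theorem setLIntegral_ofReal_abs_rpow_le_of_sublevel (hs : MeasurableSet s) (hu : Measurable u)
    (hC : 0 ≤ C) (hsub : HasSublevelBound μ s u C δ)
    (hδp : -δ < p) (hp : p < 0) (m : ℝ) :
    ∫⁻ x in s, ENNReal.ofReal |u x| ^ p ∂μ ≤
      ENNReal.ofReal (2 ^ (m * p)) * μ s +
        ENNReal.ofReal (2 ^ (-p + m * (δ + p)) * C / (1 - 2 ^ (-δ - p))) := by
  set f : α → ℝ≥0∞ := fun x => ENNReal.ofReal |u x| ^ p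
  set r : ℝ := 2 ^ (-δ - p)
  have hr0 : 0 ≤ r := by positivity
  have hr1 : r < 1 := Real.rpow_lt_one_of_one_lt_of_neg one_lt_two (by linarith)
  have hzero : ∫⁻ x in {x ∈ s | u x = 0}, f x ∂μ = 0 :=
    setLIntegral_measure_zero _ _
      (measure_zero_set_eq_zero_of_sublevel (by linarith) hsub)
  have htop : ∫⁻ x in {x ∈ s | 2 ^ m < |u x|}, f x ∂μ ≤ ENNReal.ofReal (2 ^ (m * p)) * μ s := by
    rw [Real.rpow_mul zero_le_two]
    refine (setLIntegral_ofReal_abs_rpow_le (hs.inter (measurableSet_lt measurable_const hu.abs))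
      hp.le (by positivity) fun x hx => hx.2.le).trans ?_
    gcongr
    exact inter_subset_left
  have hshells : ∑' j, ∫⁻ x in dyadicShell s u m j, f x ∂μ ≤
      ENNReal.ofReal (2 ^ (-p + m * (δ + p)) * C / (1 - r)) :=
    calc ∑' j, ∫⁻ x in dyadicShell s u m j, f x ∂μ
        ≤ ∑' j : ℕ, ENNReal.ofReal (2 ^ (-p + m * (δ + p)) * C * r ^ j) :=
          ENNReal.tsum_le_tsum (setLIntegral_dyadicShell_le hs hu hp.le hsub m)
      _ = ENNReal.ofReal (2 ^ (-p + m * (δ + p)) * C / (1 - r)) := by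
          rw [← ENNReal.ofReal_tsum_of_nonneg (fun j => by positivity)
            ((summable_geometric_of_lt_one hr0 hr1).mul_left _),
            tsum_mul_left, tsum_geometric_of_lt_one hr0 hr1, div_eq_mul_inv]
  calc ∫⁻ x in s, f x ∂μ
      ≤ ∫⁻ x in ({x ∈ s | u x = 0} ∪ {x ∈ s | 2 ^ m < |u x|}) ∪ ⋃ j, dyadicShell s u m j,
          f x ∂μ := lintegral_mono_set (subset_union_dyadicShell m)
    _ ≤ (∫⁻ x in {x ∈ s | u x = 0}, f x ∂μ) + (∫⁻ x in {x ∈ s | 2 ^ m < |u x|}, f x ∂μ) +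
          ∑' j, ∫⁻ x in dyadicShell s u m j, f x ∂μ :=
        (lintegral_union_le _ _ _).trans
          (add_le_add (lintegral_union_le _ _ _) (lintegral_iUnion_le _ _))
    _ ≤ _ := by
        rw [hzero, zero_add]
        exact add_le_add htop hshells

theorem inv_measure_mul_setLIntegral_le_of_sublevel (hs : MeasurableSet s) (hμs : μ s ≠ ∞)
    (hμs0 : μ s ≠ 0) (hu : Measurable u) (hC : 0 ≤ C)
    (hsub : HasSublevelBound μ s u C δ)
    (hδp : -δ < p) (hp : p < 0) (m : ℝ) :
    (μ s)⁻¹ * ∫⁻ x in s, ENNReal.ofReal |u x| ^ p ∂μ ≤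
      ENNReal.ofReal (2 ^ (-p + m * (δ + p)) * C / ((1 - 2 ^ (-δ - p)) * (μ s).toReal) +
        2 ^ (m * p)) := by
  have hr : 0 ≤ 1 - (2 : ℝ) ^ (-δ - p) := Real.one_sub_two_rpow_nonneg (by linarith)
  calc (μ s)⁻¹ * ∫⁻ x in s, ENNReal.ofReal |u x| ^ p ∂μ
      ≤ (μ s)⁻¹ * (ENNReal.ofReal (2 ^ (m * p)) * μ s +
          ENNReal.ofReal (2 ^ (-p + m * (δ + p)) * C / (1 - 2 ^ (-δ - p)))) := by
        gcongr
        exact setLIntegral_ofReal_abs_rpow_le_of_sublevel hs hu hC hsub hδp hp m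
    _ = (μ s)⁻¹ * ENNReal.ofReal (2 ^ (-p + m * (δ + p)) * C / (1 - 2 ^ (-δ - p))) +
          ENNReal.ofReal (2 ^ (m * p)) := by
        rw [mul_add, mul_comm _ (μ s), ← mul_assoc, ENNReal.inv_mul_cancel hμs0 hμs, one_mul,
          add_comm]
    _ = ENNReal.ofReal (2 ^ (-p + m * (δ + p)) * C / (1 - 2 ^ (-δ - p)) / (μ s).toReal) +
          ENNReal.ofReal (2 ^ (m * p)) := by
        rw [ENNReal.ofReal_div_of_pos (toReal_pos hμs0 hμs), ENNReal.ofReal_toReal hμs,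
          ENNReal.div_eq_inv_mul]
    _ = _ := by rw [← ENNReal.ofReal_add (by positivity) (by positivity), div_div]

end Sublevel

theorem stmt18_general (n : ℕ) (Ω : Set (EuclideanSpace ℝ (Fin n)))
    (hΩm : MeasurableSet Ω) (hΩbdd : Bornology.IsBounded Ω) (hΩpos : 0 < volume Ω)
    (C δ : ℝ) (hC : 0 < C)
    (u : EuclideanSpace ℝ (Fin n) → ℝ) (hu : Measurable u)
    (hsub : ∀ ε > (0:ℝ), volume {x ∈ Ω | |u x| ≤ ε} ≤ ENNReal.ofReal (C * ε ^ δ))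
    (p : ℝ) (hp1 : -δ < p) (hp2 : p < 0)
    (k₀ : ℤ) :
    ENNReal.ofReal ((2 ^ (-p + (k₀ : ℝ) * (δ + p)) * C /
        ((1 - 2 ^ (-δ - p)) * (volume Ω).toReal) + 2 ^ ((k₀ : ℝ) * p)) ^ (1 / p)) ≤
      ((volume Ω)⁻¹ * ∫⁻ x in Ω, (ENNReal.ofReal |u x|) ^ p) ^ (1 / p) := by
  have hr : 0 ≤ 1 - (2 : ℝ) ^ (-δ - p) := Real.one_sub_two_rpow_nonneg (by linarith)
  have hbound_pos : 0 < 2 ^ (-p + (k₀ : ℝ) * (δ + p)) * C /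
      ((1 - 2 ^ (-δ - p)) * (volume Ω).toReal) + 2 ^ ((k₀ : ℝ) * p) := by
    positivity
  rw [← ENNReal.ofReal_rpow_of_pos hbound_pos]
  exact ENNReal.rpow_le_rpow_of_nonpos
    (inv_measure_mul_setLIntegral_le_of_sublevel hΩm hΩbdd.measure_lt_top.ne hΩpos.ne' hu hC.le
      hsub hp1 hp2 k₀)
    (one_div_nonpos.mpr hp2.le)

/-- a uniform sublevel set estimate `|{|u| ≤ ε}| ≤ C ε^δ` implies, for
`−δ < p < 0`, the lower bound
`‖u‖_p ≥ (2^{−p+k₀(δ+p)} C/((1−2^{−δ−p})|Ω|) + 2^{k₀p})^{1/p}` on the normalised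
`L^p` mean, where `k₀` is the smallest integer `k` with `2^{kδ} C ≥ |Ω|`. -/
theorem stmt18 (n : ℕ) (Ω : Set (EuclideanSpace ℝ (Fin n)))
    (hΩm : MeasurableSet Ω) (hΩbdd : Bornology.IsBounded Ω) (hΩpos : 0 < volume Ω)
    (C δ : ℝ) (hC : 0 < C) (hδ : 0 < δ)
    (u : EuclideanSpace ℝ (Fin n) → ℝ) (hu : Measurable u)
    (hsub : ∀ ε > (0:ℝ), volume {x ∈ Ω | |u x| ≤ ε} ≤ ENNReal.ofReal (C * ε ^ δ))
    (p : ℝ) (hp1 : -δ < p) (hp2 : p < 0)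
    (k₀ : ℤ) (hk₀ : (volume Ω).toReal ≤ 2 ^ ((k₀ : ℝ) * δ) * C)
    (hk₀min : ∀ k : ℤ, k < k₀ → 2 ^ ((k : ℝ) * δ) * C < (volume Ω).toReal) :
    ENNReal.ofReal ((2 ^ (-p + (k₀ : ℝ) * (δ + p)) * C /
        ((1 - 2 ^ (-δ - p)) * (volume Ω).toReal) + 2 ^ ((k₀ : ℝ) * p)) ^ (1 / p)) ≤
      ((volume Ω)⁻¹ * ∫⁻ x in Ω, (ENNReal.ofReal |u x|) ^ p) ^ (1 / p) :=
  stmt18_general n Ω hΩm hΩbdd hΩpos C δ hC u hu hsub p hp1 hp2 k₀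
end
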